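/- arXiv:1710.08200 — 5 statements merged into one kernel-verified Lean document; each statement's English description precedes it below -/
import Mathlib

section
/- Let f be absolutely continuous on every interval [ε,M] with 0<ε<M, and let a < 1/2. If ∫₀^∞ |f'(r)|² r^{2a} dr < ∞, then f extends continuously to [0,1] (i.e. f(0) exists) and lim_{t→0} |f(t) - f(0)| · t^{-(1/2 - a)} = 0. -/
/-!
Cauchy–Schwarz with the weights `r ^ a` and `r ^ (-a)` gives
`∫₀ᵗ ‖f'‖ ≤ (∫₀ᵗ ‖f'‖² r^(2a))^(1/2) · (t^(1-2a) / (1-2a))^(1/2)`, finite because `a < 1/2`.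
Hence `f'` is integrable at `0`, `f(0) := f(1) - ∫₀¹ f'` is the limit of `f`, and
`‖f(t) - f(0)‖ · t^(-(1/2-a))` is bounded by `(∫₀ᵗ ‖f'‖² r^(2a) / (1-2a))^(1/2)`, which tends to `0`
by absolute continuity of the integral.
-/

open MeasureTheory Set Filter Topology
open scoped ENNReal

section

variable {E : Type*} [NormedAddCommGroup E]

theorem aestronglyMeasurable_restrict_Ioc_zero {g : ℝ → E} {t : ℝ}
    (hg : ∀ s ∈ Ioi (0 : ℝ), IntervalIntegrable g volume s t) :
    AEStronglyMeasurable g (volume.restrict (Ioc 0 t)) :=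
  (aecover_Ioc_of_Ioc tendsto_one_div_add_atTop_nhds_zero_nat
    tendsto_const_nhds).aestronglyMeasurable fun _ =>
    (hg _ (mem_Ioi.2 Nat.one_div_pos_of_nat)).1.1.mono_measure
      (Measure.restrict_mono subset_rfl Measure.restrict_le_self)

theorem lintegral_Ioc_zero_ofReal_rpow_neg {c t : ℝ} (hc : c < 1) (ht : 0 ≤ t) :
    ∫⁻ r in Ioc 0 t, ENNReal.ofReal (r ^ (-c)) = ENNReal.ofReal (t ^ (1 - c) / (1 - c)) := by
  have hint : IntegrableOn (fun r : ℝ => r ^ (-c)) (Ioc 0 t) :=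
    (intervalIntegral.intervalIntegrable_rpow' (by linarith)).1
  have hnn : 0 ≤ᵐ[volume.restrict (Ioc 0 t)] fun r : ℝ => r ^ (-c) :=
    (ae_restrict_iff' measurableSet_Ioc).2
      (ae_of_all _ fun r hr => (Real.rpow_pos_of_pos hr.1 _).le)
  rw [← ofReal_integral_eq_lintegral_ofReal hint hnn, ← intervalIntegral.integral_of_le ht,
    integral_rpow (Or.inl (by linarith)), Real.zero_rpow (by linarith), sub_zero,
    neg_add_eq_sub]

theorem lintegral_norm_Ioc_zero_le_weighted_L2 {g : ℝ → E} {a t : ℝ} (ha : a < 1 / 2)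
    (ht : 0 ≤ t) (hg : AEStronglyMeasurable g (volume.restrict (Ioc 0 t))) :
    ∫⁻ r in Ioc 0 t, ENNReal.ofReal ‖g r‖ ≤
      (∫⁻ r in Ioc 0 t, ENNReal.ofReal (‖g r‖ ^ 2 * r ^ (2 * a))) ^ (1 / 2 : ℝ) *
        ENNReal.ofReal (t ^ (1 - 2 * a) / (1 - 2 * a)) ^ (1 / 2 : ℝ) := by
  set μ := volume.restrict (Ioc (0 : ℝ) t)
  set F : ℝ → ℝ≥0∞ := fun r => ENNReal.ofReal (‖g r‖ * r ^ a)
  set W : ℝ → ℝ≥0∞ := fun r => ENNReal.ofReal (r ^ (-a))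
  have hF : AEMeasurable F μ :=
    ENNReal.measurable_ofReal.comp_aemeasurable
      (hg.norm.aemeasurable.mul (measurable_id.pow_const a).aemeasurable)
  have hW : AEMeasurable W μ :=
    ENNReal.measurable_ofReal.comp_aemeasurable (measurable_id.pow_const (-a)).aemeasurable
  have hsplit : ∫⁻ r in Ioc 0 t, ENNReal.ofReal ‖g r‖ = ∫⁻ r, (F * W) r ∂μ := by
    refine setLIntegral_congr_fun measurableSet_Ioc fun r hr => ?_
    rw [Pi.mul_apply,
      ← ENNReal.ofReal_mul (mul_nonneg (norm_nonneg _) (Real.rpow_nonneg hr.1.le _)), mul_assoc, ← Real.rpow_add hr.1, add_neg_cancel, Real.rpow_zero, mul_one]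
  have hF2 :
      ∫⁻ r, F r ^ (2 : ℝ) ∂μ = ∫⁻ r in Ioc 0 t, ENNReal.ofReal (‖g r‖ ^ 2 * r ^ (2 * a)) := by
    refine setLIntegral_congr_fun measurableSet_Ioc fun r hr => ?_
    have hra := Real.rpow_nonneg hr.1.le a
    rw [ENNReal.ofReal_rpow_of_nonneg (by positivity) zero_le_two,
      Real.mul_rpow (norm_nonneg _) hra, ← Real.rpow_mul hr.1.le, Real.rpow_two, mul_comm a]
  have hW2 : ∫⁻ r, W r ^ (2 : ℝ) ∂μ = ENNReal.ofReal (t ^ (1 - 2 * a) / (1 - 2 * a)) := by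
    rw [← lintegral_Ioc_zero_ofReal_rpow_neg (by linarith) ht]
    refine setLIntegral_congr_fun measurableSet_Ioc fun r hr => ?_
    rw [ENNReal.ofReal_rpow_of_nonneg (Real.rpow_nonneg hr.1.le _) zero_le_two,
      ← Real.rpow_mul hr.1.le, neg_mul, mul_comm]
  calc ∫⁻ r in Ioc 0 t, ENNReal.ofReal ‖g r‖ = ∫⁻ r, (F * W) r ∂μ := hsplit
    _ ≤ (∫⁻ r, F r ^ (2 : ℝ) ∂μ) ^ (1 / 2 : ℝ) * (∫⁻ r, W r ^ (2 : ℝ) ∂μ) ^ (1 / 2 : ℝ) :=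
      ENNReal.lintegral_mul_le_Lp_mul_Lq μ Real.HolderConjugate.two_two hF hW
    _ = _ := by rw [hF2, hW2]

theorem integrableOn_Ioc_zero_of_weighted_L2 {g : ℝ → E} {a t : ℝ} (ha : a < 1 / 2)
    (ht : 0 ≤ t) (hg : AEStronglyMeasurable g (volume.restrict (Ioc 0 t)))
    (hfin : ∫⁻ r in Ioc 0 t, ENNReal.ofReal (‖g r‖ ^ 2 * r ^ (2 * a)) ≠ ∞) :
    IntegrableOn g (Ioc 0 t) :=
  ⟨hg, (hasFiniteIntegral_iff_norm g).2 <|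
    (lintegral_norm_Ioc_zero_le_weighted_L2 ha ht hg).trans_lt <|
      ENNReal.mul_lt_top (ENNReal.rpow_lt_top_of_nonneg (by norm_num) hfin)
        (ENNReal.rpow_lt_top_of_nonneg (by norm_num) ENNReal.ofReal_ne_top)⟩

theorem norm_setIntegral_Ioc_zero_le_weighted_L2 [NormedSpace ℝ E] {g : ℝ → E} {a t : ℝ}
    (ha : a < 1 / 2) (ht : 0 ≤ t) (hg : AEStronglyMeasurable g (volume.restrict (Ioc 0 t)))
    (hfin : ∫⁻ r in Ioc 0 t, ENNReal.ofReal (‖g r‖ ^ 2 * r ^ (2 * a)) ≠ ∞) :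
    ‖∫ r in Ioc 0 t, g r‖ ≤
      √((∫⁻ r in Ioc 0 t, ENNReal.ofReal (‖g r‖ ^ 2 * r ^ (2 * a))).toReal / (1 - 2 * a)) *
        t ^ (1 / 2 - a) := by
  set I := ∫⁻ r in Ioc 0 t, ENNReal.ofReal (‖g r‖ ^ 2 * r ^ (2 * a))
  have hc : 0 < 1 - 2 * a := by linarith
  calc ‖∫ r in Ioc 0 t, g r‖ ≤ (∫⁻ r in Ioc 0 t, ENNReal.ofReal ‖g r‖).toReal :=
        norm_integral_le_lintegral_norm g
    _ ≤ (I ^ (1 / 2 : ℝ) * ENNReal.ofReal (t ^ (1 - 2 * a) / (1 - 2 * a)) ^ (1 / 2 : ℝ)).toReal :=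
        ENNReal.toReal_mono (ENNReal.mul_ne_top (ENNReal.rpow_ne_top_of_nonneg (by norm_num) hfin)
          (ENNReal.rpow_ne_top_of_nonneg (by norm_num) ENNReal.ofReal_ne_top))
          (lintegral_norm_Ioc_zero_le_weighted_L2 ha ht hg)
    _ = √(I.toReal / (1 - 2 * a)) * t ^ (1 / 2 - a) := by
        rw [ENNReal.toReal_mul, ← ENNReal.toReal_rpow, ← ENNReal.toReal_rpow,
          ENNReal.toReal_ofReal (div_nonneg (Real.rpow_nonneg ht _) hc.le), ← Real.sqrt_eq_rpow,
          ← Real.sqrt_eq_rpow, Real.sqrt_div' _ hc.le, Real.sqrt_div' _ hc.le,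
          Real.sqrt_eq_rpow (t ^ _), ← Real.rpow_mul ht]
        ring_nf

theorem tendsto_setLIntegral_Ioc_nhdsGT {g : ℝ → ℝ≥0∞} {x : ℝ} (hg : ∫⁻ r in Ioi x, g r ≠ ∞) :
    Tendsto (fun t => ∫⁻ r in Ioc x t, g r) (𝓝[>] x) (𝓝 0) := by
  have hsub : ∀ t, volume.restrict (Ioi x) (Ioc x t) = ENNReal.ofReal (t - x) := fun t => by
    rw [Measure.restrict_apply measurableSet_Ioc, inter_eq_left.2 Ioc_subset_Ioi_self,
      Real.volume_Ioc]
  have hvol : Tendsto (fun t => volume.restrict (Ioi x) (Ioc x t)) (𝓝[>] x) (𝓝 0) := by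
    simp_rw [hsub]
    simpa [Function.comp_def] using
      ((ENNReal.continuous_ofReal.comp (continuous_sub_right x)).tendsto x).mono_left
        nhdsWithin_le_nhds
  simpa only [Measure.restrict_restrict measurableSet_Ioc, inter_eq_left.2 Ioc_subset_Ioi_self]
    using tendsto_setLIntegral_zero hg hvol

theorem tendsto_and_tendsto_norm_sub_mul_rpow_neg_of_le {F : ℝ → E} {L : E} {S : ℝ → ℝ} {b : ℝ}
    (hb : 0 < b) (hS : Tendsto S (𝓝[>] 0) (𝓝 0)) (hF : ∀ t > 0, ‖F t - L‖ ≤ S t * t ^ b) :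
    Tendsto F (𝓝[>] 0) (𝓝 L) ∧ Tendsto (fun t => ‖F t - L‖ * t ^ (-b)) (𝓝[>] 0) (𝓝 0) := by
  have hpow : Tendsto (fun t : ℝ => t ^ b) (𝓝[>] 0) (𝓝 0) := by
    simpa [Real.zero_rpow hb.ne'] using
      (Real.continuousAt_rpow_const 0 b (Or.inr hb.le)).tendsto.mono_left nhdsWithin_le_nhds
  constructor
  · refine tendsto_iff_norm_sub_tendsto_zero.2 <|
      squeeze_zero' (Eventually.of_forall fun _ => norm_nonneg _) ?_ (by simpa using hS.mul hpow)
    filter_upwards [self_mem_nhdsWithin] with t ht using hF t ht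
  · refine squeeze_zero' ?_ ?_ hS
    · filter_upwards [self_mem_nhdsWithin] with t ht
      exact mul_nonneg (norm_nonneg _) (Real.rpow_nonneg (le_of_lt ht) _)
    · filter_upwards [self_mem_nhdsWithin] with t ht
      calc ‖F t - L‖ * t ^ (-b) ≤ S t * t ^ b * t ^ (-b) :=
            mul_le_mul_of_nonneg_right (hF t ht) (Real.rpow_nonneg (le_of_lt ht) _)
        _ = S t := by rw [mul_assoc, ← Real.rpow_add ht, add_neg_cancel, Real.rpow_zero, mul_one]

end

/-- Trace lemma at the origin, case `a < 1/2`: if `f` is locally absolutely continuous on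
`(0,∞)` with derivative `f'` and `∫₀^∞ |f'(r)|² r^(2a) dr < ∞`, then `f` has a boundary
value `L = f(0)` at the origin and `|f(t) - L| t^(-(1/2 - a)) → 0` as `t → 0⁺`. -/
theorem stmt_0 (f f' : ℝ → ℂ) (a : ℝ) (ha : a < 1/2)
    (hloc : ∀ s ∈ Ioi (0:ℝ), ∀ t ∈ Ioi (0:ℝ), IntervalIntegrable f' volume s t)
    (hFTC : ∀ s ∈ Ioi (0:ℝ), ∀ t ∈ Ioi (0:ℝ), f t - f s = ∫ r in s..t, f' r)
    (hint : ∫⁻ r in Ioi (0:ℝ), ENNReal.ofReal (‖f' r‖^2 * r ^ (2*a)) < ⊤) :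
    ∃ L : ℂ, Tendsto f (𝓝[>] (0:ℝ)) (𝓝 L) ∧
      Tendsto (fun t : ℝ => ‖f t - L‖ * t ^ (-(1/2 - a))) (𝓝[>] (0:ℝ)) (𝓝 0) := by
  set W : ℝ → ℝ≥0∞ := fun t => ∫⁻ r in Ioc 0 t, ENNReal.ofReal (‖f' r‖ ^ 2 * r ^ (2 * a))
  have hW : ∀ t, W t ≠ ∞ := fun t => ((lintegral_mono_set Ioc_subset_Ioi_self).trans_lt hint).ne
  have hmeas : ∀ t > 0, AEStronglyMeasurable f' (volume.restrict (Ioc 0 t)) :=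
    fun t ht => aestronglyMeasurable_restrict_Ioc_zero fun s hs => hloc s hs t ht
  have hf'0 : ∀ t > 0, IntervalIntegrable f' volume 0 t := fun t ht =>
    (intervalIntegrable_iff_integrableOn_Ioc_of_le ht.le).2
      (integrableOn_Ioc_zero_of_weighted_L2 ha ht.le (hmeas t ht) (hW t))
  have hfL : ∀ t > 0, f t - (f 1 - ∫ r in (0)..1, f' r) = ∫ r in Ioc 0 t, f' r := fun t ht => by
    rw [← intervalIntegral.integral_of_le ht.le, ← intervalIntegral.integral_add_adjacent_intervals
      (hf'0 t ht) (hloc t ht 1 (mem_Ioi.2 one_pos)), ← hFTC t ht 1 (mem_Ioi.2 one_pos)]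
    ring
  have hW0 : Tendsto (fun t => √((W t).toReal / (1 - 2 * a))) (𝓝[>] 0) (𝓝 0) := by
    simpa only [Function.comp_def, ENNReal.toReal_zero, zero_div, Real.sqrt_zero] using
      (((ENNReal.tendsto_toReal ENNReal.zero_ne_top).comp
        (tendsto_setLIntegral_Ioc_nhdsGT hint.ne)).div_const (1 - 2 * a)).sqrt
  exact ⟨_, tendsto_and_tendsto_norm_sub_mul_rpow_neg_of_le (by linarith) hW0 fun t ht =>
    hfL t ht ▸ norm_setIntegral_Ioc_zero_le_weighted_L2 ha ht.le (hmeas t ht) (hW t)⟩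
end

section
/- Let f be locally absolutely continuous on (0,∞) and a > 1/2. If ∫₀^∞ |f'(r)|² r^{2a} dr < ∞, then there exists a limit f(∞) = lim_{t→∞} f(t) in ℂ, and moreover lim_{t→∞} |f(t) - f(∞)| · t^{a - 1/2} = 0. -/
/-!
Cauchy–Schwarz with the weight `r ^ (2a)` gives, for `0 < s ≤ t`,
`‖f t - f s‖ ≤ (∫ₛ^∞ ‖f'‖² r^(2a))^(1/2) (∫ₛ^∞ r^(-2a))^(1/2) = √(T s / (2a - 1)) s^(1/2 - a)`,
where `T s`, the tail of the convergent weighted integral, tends to `0`. So `f` is Cauchy at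
infinity, and letting `t → ∞` gives `‖f s - f ∞‖ s^(a - 1/2) ≤ √(T s / (2a - 1)) → 0`.
-/

open MeasureTheory Set Filter Topology
open scoped ENNReal

theorem exists_tendsto_of_dist_le_tendsto_zero {β α : Type*} [SemilatticeSup β] [Nonempty β]
    [PseudoMetricSpace α] [CompleteSpace α] {f : β → α} {B : β → ℝ}
    (hB : Tendsto B atTop (𝓝 0)) (hfB : ∀ᶠ s in atTop, ∀ t, s ≤ t → dist (f t) (f s) ≤ B s) :
    ∃ L, Tendsto f atTop (𝓝 L) ∧ ∀ᶠ s in atTop, dist (f s) L ≤ B s := by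
  have hcauchy : CauchySeq f := Metric.cauchySeq_iff'.2 fun ε hε =>
    (hfB.and (hB.eventually (gt_mem_nhds hε))).exists.imp fun N hN n hn =>
      (hN.1 n hn).trans_lt hN.2
  obtain ⟨L, hL⟩ := cauchySeq_tendsto_of_complete hcauchy
  refine ⟨L, hL, hfB.mono fun s hs => ?_⟩
  rw [dist_comm]
  exact le_of_tendsto (hL.dist tendsto_const_nhds) ((eventually_ge_atTop s).mono hs)

theorem tendsto_setLIntegral_Ioi_atTop_zero {α : Type*} [LinearOrder α] [TopologicalSpace α]
    [OrderClosedTopology α] [MeasurableSpace α] [OpensMeasurableSpace α]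
    [(atTop : Filter α).IsCountablyGenerated] {μ : Measure α} {g : α → ℝ≥0∞} {c : α}
    (hg : ∫⁻ x in Ioi c, g x ∂μ ≠ ∞) :
    Tendsto (fun s => ∫⁻ x in Ioi s, g x ∂μ) atTop (𝓝 0) := by
  have hempty : (⋂ s : α, Ioi s) = ∅ :=
    eq_empty_of_forall_notMem fun x hx => lt_irrefl x (mem_iInter.1 hx x)
  have := tendsto_measure_iInter_atTop (μ := μ.withDensity g)
    (fun _ => measurableSet_Ioi.nullMeasurableSet) (fun _ _ h => Ioi_subset_Ioi h)
    ⟨c, by rwa [withDensity_apply _ measurableSet_Ioi]⟩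
  rw [hempty, measure_empty] at this
  exact this.congr fun _ => withDensity_apply _ measurableSet_Ioi

theorem setLIntegral_Ioi_ofReal_rpow_of_lt {b c : ℝ} (hb : b < -1) (hc : 0 < c) :
    ∫⁻ r in Ioi c, ENNReal.ofReal (r ^ b) = ENNReal.ofReal (-c ^ (b + 1) / (b + 1)) := by
  rw [← integral_Ioi_rpow_of_lt hb hc, ofReal_integral_eq_lintegral_ofReal
    (integrableOn_Ioi_rpow_of_lt hb hc)]
  exact (ae_restrict_iff' measurableSet_Ioi).2
    (ae_of_all _ fun r hr => Real.rpow_nonneg (hc.trans hr).le _)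

theorem setLIntegral_enorm_le_weighted_cauchySchwarz {E : Type*} [NormedAddCommGroup E]
    {μ : Measure ℝ} {g : ℝ → E} {S : Set ℝ} (hS : MeasurableSet S) (hS0 : S ⊆ Ioi 0)
    (hg : AEStronglyMeasurable g (μ.restrict S)) (a : ℝ) :
    ∫⁻ r in S, ‖g r‖ₑ ∂μ ≤
      (∫⁻ r in S, ENNReal.ofReal (‖g r‖ ^ 2 * r ^ (2 * a)) ∂μ) ^ (1 / 2 : ℝ) *
        (∫⁻ r in S, ENNReal.ofReal (r ^ (-(2 * a))) ∂μ) ^ (1 / 2 : ℝ) := by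
  have hpow (b : ℝ) : AEMeasurable (fun r : ℝ => r ^ b) (μ.restrict S) :=
    ContinuousOn.aemeasurable (fun r hr => (Real.continuousAt_rpow_const r b
      (Or.inl (hS0 hr).ne')).continuousWithinAt) hS
  set φ : ℝ → ℝ≥0∞ := fun r => ENNReal.ofReal (‖g r‖ * r ^ a)
  set ψ : ℝ → ℝ≥0∞ := fun r => ENNReal.ofReal (r ^ (-a))
  have holder : ∫⁻ r in S, (φ * ψ) r ∂μ ≤
      (∫⁻ r in S, φ r ^ (2 : ℝ) ∂μ) ^ (1 / 2 : ℝ) * (∫⁻ r in S, ψ r ^ (2 : ℝ) ∂μ) ^ (1 / 2 : ℝ) :=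
    ENNReal.lintegral_mul_le_Lp_mul_Lq _ Real.HolderConjugate.two_two
      (ENNReal.measurable_ofReal.comp_aemeasurable (hg.norm.aemeasurable.mul (hpow a)))
      (ENNReal.measurable_ofReal.comp_aemeasurable (hpow (-a)))
  have hφψ : ∫⁻ r in S, ‖g r‖ₑ ∂μ = ∫⁻ r in S, (φ * ψ) r ∂μ := by
    refine setLIntegral_congr_fun hS fun r hr => ?_
    have hr0 : 0 < r := hS0 hr
    rw [Pi.mul_apply, ← ENNReal.ofReal_mul (by positivity), mul_assoc, ← Real.rpow_add hr0,
      add_neg_cancel, Real.rpow_zero, mul_one, ofReal_norm]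
  have hφ : ∫⁻ r in S, φ r ^ (2 : ℝ) ∂μ =
      ∫⁻ r in S, ENNReal.ofReal (‖g r‖ ^ 2 * r ^ (2 * a)) ∂μ := by
    refine setLIntegral_congr_fun hS fun r hr => ?_
    have hr0 : 0 ≤ r := (hS0 hr).le
    rw [ENNReal.ofReal_rpow_of_nonneg (by positivity) zero_le_two, Real.mul_rpow (by positivity)
      (by positivity), ← Real.rpow_mul hr0, mul_comm a, Real.rpow_two]
  have hψ : ∫⁻ r in S, ψ r ^ (2 : ℝ) ∂μ = ∫⁻ r in S, ENNReal.ofReal (r ^ (-(2 * a))) ∂μ := by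
    refine setLIntegral_congr_fun hS fun r hr => ?_
    have hr0 : 0 ≤ r := (hS0 hr).le
    rw [ENNReal.ofReal_rpow_of_nonneg (by positivity) zero_le_two, ← Real.rpow_mul hr0,
      neg_mul, mul_comm a]
  rwa [hφψ, ← hφ, ← hψ]

noncomputable def weightedTail {E : Type*} [NormedAddCommGroup E] (g : ℝ → E) (a s : ℝ) : ℝ≥0∞ :=
  ∫⁻ r in Ioi s, ENNReal.ofReal (‖g r‖ ^ 2 * r ^ (2 * a))

theorem norm_intervalIntegral_le_weightedTail {E : Type*} [NormedAddCommGroup E]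
    [NormedSpace ℝ E] {g : ℝ → E} {a s t : ℝ} (ha : 1 / 2 < a) (hs : 0 < s) (hst : s ≤ t)
    (hg : IntervalIntegrable g volume s t) (hT : weightedTail g a s ≠ ∞) :
    ‖∫ r in s..t, g r‖ ≤ √((weightedTail g a s).toReal / (2 * a - 1)) * s ^ (-(a - 1 / 2)) := by
  have hpow : ∫⁻ r in Ioi s, ENNReal.ofReal (r ^ (-(2 * a))) =
      ENNReal.ofReal (s ^ (1 - 2 * a) / (2 * a - 1)) := by
    rw [setLIntegral_Ioi_ofReal_rpow_of_lt (by linarith) hs,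
      show -(2 * a) + 1 = -(2 * a - 1) by ring, neg_div_neg_eq, neg_sub]
  have hbound : ‖∫ r in s..t, g r‖ₑ ≤ weightedTail g a s ^ (1 / 2 : ℝ) *
      ENNReal.ofReal (s ^ (1 - 2 * a) / (2 * a - 1)) ^ (1 / 2 : ℝ) := calc
    ‖∫ r in s..t, g r‖ₑ = ‖∫ r in Ioc s t, g r‖ₑ := by rw [intervalIntegral.integral_of_le hst]
    _ ≤ ∫⁻ r in Ioc s t, ‖g r‖ₑ := enorm_integral_le_lintegral_enorm _
    _ ≤ _ := setLIntegral_enorm_le_weighted_cauchySchwarz measurableSet_Ioc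
          (Ioc_subset_Ioi_self.trans (Ioi_subset_Ioi hs.le)) hg.1.aestronglyMeasurable a
    _ ≤ _ := by
      rw [← hpow]
      gcongr ?_ ^ _ * ?_ ^ _ <;> exact lintegral_mono_set Ioc_subset_Ioi_self
  have hne : weightedTail g a s ^ (1 / 2 : ℝ) *
      ENNReal.ofReal (s ^ (1 - 2 * a) / (2 * a - 1)) ^ (1 / 2 : ℝ) ≠ ∞ := by
    finiteness
  have hs2 : (s ^ (-(a - 1 / 2))) ^ 2 = s ^ (1 - 2 * a) := by
    rw [← Real.rpow_natCast, ← Real.rpow_mul hs.le]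
    ring_nf
  calc ‖∫ r in s..t, g r‖ = ‖∫ r in s..t, g r‖ₑ.toReal := (toReal_enorm _).symm
    _ ≤ _ := ENNReal.toReal_mono hne hbound
    _ = √((weightedTail g a s).toReal * (s ^ (1 - 2 * a) / (2 * a - 1))) := by
      rw [ENNReal.toReal_mul, ← ENNReal.toReal_rpow, ← ENNReal.toReal_rpow,
        ENNReal.toReal_ofReal (div_nonneg (Real.rpow_nonneg hs.le _) (by linarith)),
        Real.sqrt_mul ENNReal.toReal_nonneg, Real.sqrt_eq_rpow, Real.sqrt_eq_rpow]
    _ = √((weightedTail g a s).toReal / (2 * a - 1) * (s ^ (-(a - 1 / 2))) ^ 2) := by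
      rw [hs2]; ring_nf
    _ = _ := by
      rw [Real.sqrt_mul (div_nonneg ENNReal.toReal_nonneg (by linarith)),
        Real.sqrt_sq (by positivity)]

/-- Trace lemma at infinity, case `a > 1/2`: if `f` is locally absolutely continuous on
`(0,∞)` with derivative `f'` and `∫₀^∞ |f'(r)|² r^(2a) dr < ∞`, then `f` has a limit
`L = f(∞)` at infinity and `|f(t) - L| t^(a - 1/2) → 0` as `t → ∞`. -/
theorem stmt_1 (f f' : ℝ → ℂ) (a : ℝ) (ha : 1/2 < a)
    (hloc : ∀ s ∈ Ioi (0:ℝ), ∀ t ∈ Ioi (0:ℝ), IntervalIntegrable f' volume s t)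
    (hFTC : ∀ s ∈ Ioi (0:ℝ), ∀ t ∈ Ioi (0:ℝ), f t - f s = ∫ r in s..t, f' r)
    (hint : ∫⁻ r in Ioi (0:ℝ), ENNReal.ofReal (‖f' r‖^2 * r ^ (2*a)) < ⊤) :
    ∃ L : ℂ, Tendsto f atTop (𝓝 L) ∧
      Tendsto (fun t : ℝ => ‖f t - L‖ * t ^ (a - 1/2)) atTop (𝓝 0) := by
  have hT (s : ℝ) (hs : 0 < s) : weightedTail f' a s ≠ ∞ :=
    ((lintegral_mono_set (Ioi_subset_Ioi hs.le)).trans_lt hint).ne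
  set C : ℝ → ℝ := fun s => √((weightedTail f' a s).toReal / (2 * a - 1))
  have hC : Tendsto C atTop (𝓝 0) := by
    have := (((ENNReal.tendsto_toReal ENNReal.zero_ne_top).comp
      (tendsto_setLIntegral_Ioi_atTop_zero hint.ne)).div_const (2 * a - 1)).sqrt
    rwa [ENNReal.toReal_zero, zero_div, Real.sqrt_zero] at this
  have hB : Tendsto (fun s => C s * s ^ (-(a - 1 / 2))) atTop (𝓝 0) := by
    simpa using hC.mul (tendsto_rpow_neg_atTop (by linarith : 0 < a - 1 / 2))
  obtain ⟨L, hL, hLB⟩ := exists_tendsto_of_dist_le_tendsto_zero (f := f) hB <| by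
    filter_upwards [eventually_gt_atTop 0] with s hs t hst
    rw [dist_eq_norm, hFTC s hs t (hs.trans_le hst)]
    exact norm_intervalIntegral_le_weightedTail ha hs hst (hloc s hs t (hs.trans_le hst))
      (hT s hs)
  refine ⟨L, hL, squeeze_zero' ?_ ?_ hC⟩
  · filter_upwards [eventually_gt_atTop 0] with t ht
    positivity
  filter_upwards [hLB, eventually_gt_atTop 0] with t hLt ht
  calc ‖f t - L‖ * t ^ (a - 1 / 2) ≤ C t * t ^ (-(a - 1 / 2)) * t ^ (a - 1 / 2) := by
        rw [← dist_eq_norm]; gcongr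
    _ = C t := by rw [mul_assoc, ← Real.rpow_add ht, neg_add_cancel, Real.rpow_zero, mul_one]
end

section
/- Weighted Hardy inequality at the origin: let a < 1/2 and let f be locally absolutely continuous on (0,∞) with ∫₀^∞ |f'(r)|² r^{2a} dr < ∞. Then f extends continuously to r = 0 and (a - 1/2)² ∫₀^∞ |f(r) - f(0)|² r^{2a-2} dr ≤ ∫₀^∞ |f'(r)|² r^{2a} dr. -/
open MeasureTheory Set Filter Topology
open scoped ENNReal

/-!
Put `c = a + 1/2 < 1` and `κ = 1 - c`. Cauchy–Schwarz against the weight `u ^ c` gives, for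
`0 < s ≤ t`, `‖f t - f s‖² ≤ (t ^ κ / κ) ∫_s^t ‖f' u‖² u ^ c du`, and this integral is finite up to
`t = 1` because `u ^ c ≤ u ^ (2a)` on `(0, 1]`. Hence `f` is Cauchy at `0⁺` with a limit `L`, and
letting `s → 0` bounds `‖f r - L‖²` by `(r ^ κ / κ) ∫_0^r ‖f' u‖² u ^ c du`. Multiplying by
`r ^ (2c - 3) = r ^ (2a - 2)`, integrating and exchanging the order of integration,
`∫_u^∞ r ^ (c - 2) dr = u ^ (c - 1) / κ` and `u ^ c u ^ (c - 1) = u ^ (2a)` turn the right-hand side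
into `κ⁻² ∫_0^∞ ‖f' u‖² u ^ (2a) du`.
-/

theorem lintegral_mul_sq_le {α : Type*} [MeasurableSpace α] {μ : Measure α} {F G : α → ℝ≥0∞}
    (hF : AEMeasurable F μ) (hG : AEMeasurable G μ) :
    (∫⁻ x, F x * G x ∂μ) ^ 2 ≤ (∫⁻ x, F x ^ 2 ∂μ) * ∫⁻ x, G x ^ 2 ∂μ := by
  have h := ENNReal.lintegral_mul_le_Lp_mul_Lq μ .two_two hF hG
  simp only [ENNReal.rpow_two, Pi.mul_apply] at h
  calc (∫⁻ x, F x * G x ∂μ) ^ 2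
      ≤ ((∫⁻ x, F x ^ 2 ∂μ) ^ (1 / 2 : ℝ) * (∫⁻ x, G x ^ 2 ∂μ) ^ (1 / 2 : ℝ)) ^ 2 :=
        pow_le_pow_left' h 2
    _ = (∫⁻ x, F x ^ 2 ∂μ) * ∫⁻ x, G x ^ 2 ∂μ := by
        rw [mul_pow, ← ENNReal.rpow_two, ← ENNReal.rpow_two, ← ENNReal.rpow_mul,
          ← ENNReal.rpow_mul]
        norm_num

theorem lintegral_Ioc_rpow_le {r s t : ℝ} (hr : -1 < r) (hs : 0 ≤ s) (hst : s ≤ t) :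
    ∫⁻ u in Ioc s t, ENNReal.ofReal (u ^ r) ≤ ENNReal.ofReal (t ^ (r + 1) / (r + 1)) := by
  have h_nonneg : 0 ≤ᵐ[volume.restrict (Ioc s t)] fun u : ℝ => u ^ r := by
    filter_upwards [ae_restrict_mem measurableSet_Ioc] with u hu
    exact Real.rpow_nonneg (hs.trans hu.1.le) _
  rw [← ofReal_integral_eq_lintegral_ofReal (intervalIntegral.intervalIntegrable_rpow' hr).1
    h_nonneg, ← intervalIntegral.integral_of_le hst, integral_rpow (Or.inl hr)]
  gcongr
  · linarith
  · exact sub_le_self _ (Real.rpow_nonneg hs _)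

theorem lintegral_Ici_rpow {p u : ℝ} (hp : p < -1) (hu : 0 < u) :
    ∫⁻ r in Ici u, ENNReal.ofReal (r ^ p) = ENNReal.ofReal (-u ^ (p + 1) / (p + 1)) := by
  have h_nonneg : 0 ≤ᵐ[volume.restrict (Ioi u)] fun r : ℝ => r ^ p := by
    filter_upwards [ae_restrict_mem measurableSet_Ioi] with r hr
    exact Real.rpow_nonneg (hu.trans hr).le _
  rw [← restrict_Ioi_eq_restrict_Ici, ← ofReal_integral_eq_lintegral_ofReal
    (integrableOn_Ioi_rpow_of_lt hp hu) h_nonneg, integral_Ioi_rpow_of_lt hp hu]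

theorem exists_tendsto_nhdsGT_of_norm_sub_le {E : Type*} [NormedAddCommGroup E] [CompleteSpace E]
    {f : ℝ → E} {ω : ℝ → ℝ} {x : ℝ} (hω : Tendsto ω (𝓝[>] x) (𝓝 0))
    (hf : ∀ᶠ t in 𝓝[>] x, ∀ s ∈ Ioc x t, ‖f t - f s‖ ≤ ω t) :
    ∃ L, Tendsto f (𝓝[>] x) (𝓝 L) := by
  suffices Cauchy (map f (𝓝[>] x)) from CompleteSpace.complete this
  refine Metric.cauchy_iff.2 ⟨map_neBot, fun ε hε => ?_⟩
  have hS := eventually_mem_nhdsWithin.and (hf.and (hω.eventually (gt_mem_nhds hε)))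
  refine ⟨f '' _, image_mem_map hS, ?_⟩
  rintro _ ⟨p, ⟨hp, hp_mod, hp_ε⟩, rfl⟩ _ ⟨q, ⟨hq, hq_mod, hq_ε⟩, rfl⟩
  rcases le_total p q with hpq | hqp
  · rw [dist_comm, dist_eq_norm]
    exact (hq_mod p ⟨hp, hpq⟩).trans_lt hq_ε
  · rw [dist_eq_norm]
    exact (hp_mod q ⟨hq, hqp⟩).trans_lt hp_ε

section

variable {E : Type*} [NormedAddCommGroup E] [NormedSpace ℝ E]

theorem ofReal_norm_intervalIntegral_sq_le {f' : ℝ → E} {c s t : ℝ} (hc : c < 1) (hs : 0 < s)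
    (hst : s ≤ t) (hf' : IntervalIntegrable f' volume s t) :
    ENNReal.ofReal (‖∫ u in s..t, f' u‖ ^ 2) ≤
      ENNReal.ofReal (t ^ (1 - c) / (1 - c)) *
        ∫⁻ u in Ioc s t, ENNReal.ofReal (‖f' u‖ ^ 2 * u ^ c) := by
  set F : ℝ → ℝ≥0∞ := fun u => ENNReal.ofReal (‖f' u‖ * u ^ (c / 2))
  set G : ℝ → ℝ≥0∞ := fun u => ENNReal.ofReal (u ^ (-(c / 2)))
  have hF : AEMeasurable F (volume.restrict (Ioc s t)) :=
    (hf'.1.aestronglyMeasurable.norm.aemeasurable.mul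
      (measurable_id.pow_const _).aemeasurable).ennreal_ofReal
  have hG : AEMeasurable G (volume.restrict (Ioc s t)) :=
    (measurable_id.pow_const _).ennreal_ofReal.aemeasurable
  have h_norm : ENNReal.ofReal ‖∫ u in s..t, f' u‖ ≤ ∫⁻ u in Ioc s t, F u * G u := by
    rw [intervalIntegral.integral_of_le hst, ofReal_norm]
    refine (enorm_integral_le_lintegral_enorm _).trans_eq
      (setLIntegral_congr_fun measurableSet_Ioc fun u hu => ?_)
    have hu : 0 < u := hs.trans hu.1
    rw [← ENNReal.ofReal_mul (by positivity), mul_assoc, ← Real.rpow_add hu, add_neg_cancel,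
      Real.rpow_zero, mul_one, ofReal_norm]
  have hF_sq : ∫⁻ u in Ioc s t, F u ^ 2 = ∫⁻ u in Ioc s t, ENNReal.ofReal (‖f' u‖ ^ 2 * u ^ c) := by
    refine setLIntegral_congr_fun measurableSet_Ioc fun u hu => ?_
    have hu : 0 < u := hs.trans hu.1
    rw [← ENNReal.ofReal_pow (by positivity), mul_pow, ← Real.rpow_natCast (u ^ _),
      ← Real.rpow_mul hu.le]
    norm_num
  have hG_sq : ∫⁻ u in Ioc s t, G u ^ 2 ≤ ENNReal.ofReal (t ^ (1 - c) / (1 - c)) := by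
    calc ∫⁻ u in Ioc s t, G u ^ 2 = ∫⁻ u in Ioc s t, ENNReal.ofReal (u ^ (-c)) := by
          refine setLIntegral_congr_fun measurableSet_Ioc fun u hu => ?_
          have hu : 0 < u := hs.trans hu.1
          rw [← ENNReal.ofReal_pow (by positivity), ← Real.rpow_natCast (u ^ _),
            ← Real.rpow_mul hu.le]
          norm_num
      _ ≤ ENNReal.ofReal (t ^ (-c + 1) / (-c + 1)) := lintegral_Ioc_rpow_le (by linarith) hs.le hst
      _ = ENNReal.ofReal (t ^ (1 - c) / (1 - c)) := by rw [neg_add_eq_sub]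
  calc ENNReal.ofReal (‖∫ u in s..t, f' u‖ ^ 2)
      = ENNReal.ofReal ‖∫ u in s..t, f' u‖ ^ 2 := ENNReal.ofReal_pow (norm_nonneg _) 2
    _ ≤ (∫⁻ u in Ioc s t, F u * G u) ^ 2 := pow_le_pow_left' h_norm 2
    _ ≤ (∫⁻ u in Ioc s t, F u ^ 2) * ∫⁻ u in Ioc s t, G u ^ 2 := lintegral_mul_sq_le hF hG
    _ ≤ _ := by rw [hF_sq, mul_comm]; gcongr

theorem exists_tendsto_nhdsGT_zero_of_lintegral_Ioc_ne_top [CompleteSpace E] {f f' : ℝ → E}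
    {c : ℝ} (hc : c < 1)
    (hloc : ∀ s ∈ Ioi (0:ℝ), ∀ t ∈ Ioi (0:ℝ), IntervalIntegrable f' volume s t)
    (hFTC : ∀ s ∈ Ioi (0:ℝ), ∀ t ∈ Ioi (0:ℝ), f t - f s = ∫ r in s..t, f' r)
    (hfin : ∫⁻ u in Ioc 0 1, ENNReal.ofReal (‖f' u‖ ^ 2 * u ^ c) ≠ ∞) :
    ∃ L, Tendsto f (𝓝[>] 0) (𝓝 L) ∧ ∀ r > 0, ENNReal.ofReal (‖f r - L‖ ^ 2) ≤
      ENNReal.ofReal (r ^ (1 - c) / (1 - c)) *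
        ∫⁻ u in Ioc 0 r, ENNReal.ofReal (‖f' u‖ ^ 2 * u ^ c) := by
  set B : ℝ → ℝ≥0∞ := fun t => ∫⁻ u in Ioc 0 t, ENNReal.ofReal (‖f' u‖ ^ 2 * u ^ c)
  have h_incr : ∀ s t, 0 < s → s ≤ t →
      ENNReal.ofReal (‖f t - f s‖ ^ 2) ≤ ENNReal.ofReal (t ^ (1 - c) / (1 - c)) * B t := by
    intro s t hs hst
    rw [hFTC s hs t (hs.trans_le hst)]
    refine (ofReal_norm_intervalIntegral_sq_le hc hs hst (hloc s hs t (hs.trans_le hst))).trans ?_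
    gcongr
    exact lintegral_mono_set (Ioc_subset_Ioc_left hs.le)
  obtain ⟨L, hL⟩ : ∃ L, Tendsto f (𝓝[>] 0) (𝓝 L) := by
    set C := (B 1).toReal / (1 - c)
    refine exists_tendsto_nhdsGT_of_norm_sub_le (ω := fun t => √(C * t ^ (1 - c))) ?_ ?_
    · have h_cont : ContinuousAt (fun t : ℝ => √(C * t ^ (1 - c))) 0 :=
        (Real.continuous_sqrt.continuousAt).comp
          (continuousAt_const.mul (Real.continuousAt_rpow_const _ _ (Or.inr (by linarith))))
      simpa [Real.zero_rpow (sub_pos.2 hc).ne'] using h_cont.tendsto.mono_left nhdsWithin_le_nhds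
    · filter_upwards [Ioc_mem_nhdsGT zero_lt_one] with t ht s hs
      have h : ENNReal.ofReal (‖f t - f s‖ ^ 2) ≤
          ENNReal.ofReal (t ^ (1 - c) / (1 - c)) * B 1 := by
        refine (h_incr s t hs.1 hs.2).trans ?_
        gcongr
        exact lintegral_mono_set (Ioc_subset_Ioc_right ht.2)
      have hB₁ : B 1 ≠ ∞ := hfin
      have h_weight : 0 ≤ t ^ (1 - c) / (1 - c) :=
        div_nonneg (Real.rpow_nonneg ht.1.le _) (sub_nonneg.2 hc.le)
      rw [← ENNReal.ofReal_toReal hB₁, ← ENNReal.ofReal_mul h_weight,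
        ENNReal.ofReal_le_ofReal_iff (mul_nonneg h_weight ENNReal.toReal_nonneg)] at h
      refine Real.le_sqrt_of_sq_le (h.trans_eq ?_)
      ring
  refine ⟨L, hL, fun r hr => ?_⟩
  have h_lim : Tendsto (fun s => ENNReal.ofReal (‖f r - f s‖ ^ 2)) (𝓝[>] 0)
      (𝓝 (ENNReal.ofReal (‖f r - L‖ ^ 2))) :=
    (ENNReal.continuous_ofReal.tendsto _).comp ((tendsto_const_nhds.sub hL).norm.pow 2)
  exact le_of_tendsto h_lim (eventually_of_mem (Ioc_mem_nhdsGT hr) fun s hs => h_incr s r hs.1 hs.2)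

end

theorem aemeasurable_restrict_Ioi_of_intervalIntegrable {E : Type*} [NormedAddCommGroup E]
    [MeasurableSpace E] [BorelSpace E] {f : ℝ → E} {x : ℝ}
    (hf : ∀ s ∈ Ioi x, ∀ t ∈ Ioi x, IntervalIntegrable f volume s t) :
    AEMeasurable f (volume.restrict (Ioi x)) := by
  have h_cover : Ioi x = ⋃ n : ℕ, Ioi (x + 1 / (n + 1)) := by
    ext y
    simp only [mem_Ioi, mem_iUnion]
    constructor
    · intro hy
      obtain ⟨n, hn⟩ := exists_nat_one_div_lt (sub_pos.2 hy)
      exact ⟨n, by linarith⟩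
    · rintro ⟨n, hn⟩
      have : (0 : ℝ) < 1 / (n + 1) := by positivity
      linarith
  rw [h_cover, aemeasurable_iUnion_iff]
  intro n
  have hxn : x < x + 1 / (n + 1) := lt_add_of_pos_right x (by positivity)
  refine aemeasurable_Ioi_of_forall_Ioc fun t ht => ?_
  exact (hf _ hxn t (hxn.trans ht)).1.aestronglyMeasurable.aemeasurable

theorem lintegral_Ioi_mul_lintegral_Ioc (μ : Measure ℝ) [SFinite μ] (x : ℝ) {w φ : ℝ → ℝ≥0∞}
    (hw : AEMeasurable w (μ.restrict (Ioi x))) (hφ : AEMeasurable φ (μ.restrict (Ioi x))) :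
    ∫⁻ r in Ioi x, w r * ∫⁻ u in Ioc x r, φ u ∂μ ∂μ =
      ∫⁻ u in Ioi x, φ u * ∫⁻ r in Ici u, w r ∂μ ∂μ := by
  set ν := μ.restrict (Ioi x)
  set K : ℝ × ℝ → ℝ≥0∞ := {p | p.2 ≤ p.1}.indicator fun p => w p.1 * φ p.2
  have hK : AEMeasurable K (ν.prod ν) :=
    (hw.comp_fst.mul hφ.comp_snd).indicator (measurableSet_le measurable_snd measurable_fst)
  have h_section_fst : ∀ r, ∫⁻ u, K (r, u) ∂ν = w r * ∫⁻ u in Ioc x r, φ u ∂μ := by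
    intro r
    have hK_r : ∀ u, K (r, u) = w r * (Iic r).indicator φ u := by
      intro u
      simp only [K, indicator_apply, mem_ofPred_eq, mem_Iic]
      split_ifs <;> simp
    simp_rw [hK_r]
    rw [lintegral_const_mul'' _ (hφ.indicator measurableSet_Iic),
      lintegral_indicator measurableSet_Iic, Measure.restrict_restrict measurableSet_Iic,
      inter_comm, Ioi_inter_Iic]
  have h_section_snd : ∀ u ∈ Ioi x, ∫⁻ r, K (r, u) ∂ν = φ u * ∫⁻ r in Ici u, w r ∂μ := by
    intro u hu
    have hK_u : ∀ r, K (r, u) = φ u * (Ici u).indicator w r := by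
      intro r
      simp only [K, indicator_apply, mem_ofPred_eq, mem_Ici]
      split_ifs <;> simp [mul_comm]
    simp_rw [hK_u]
    rw [lintegral_const_mul'' _ (hw.indicator measurableSet_Ici),
      lintegral_indicator measurableSet_Ici, Measure.restrict_restrict measurableSet_Ici,
      inter_eq_left.2 (Ici_subset_Ioi.2 hu)]
  calc ∫⁻ r in Ioi x, w r * ∫⁻ u in Ioc x r, φ u ∂μ ∂μ = ∫⁻ r, ∫⁻ u, K (r, u) ∂ν ∂ν :=
        lintegral_congr fun r => (h_section_fst r).symm
    _ = ∫⁻ u, ∫⁻ r, K (r, u) ∂ν ∂ν := lintegral_lintegral_swap hK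
    _ = ∫⁻ u in Ioi x, φ u * ∫⁻ r in Ici u, w r ∂μ ∂μ :=
        setLIntegral_congr_fun measurableSet_Ioi h_section_snd

theorem lintegral_mul_rpow_le_of_le_lintegral_Ioc {c : ℝ} (hc : c < 1) {g h : ℝ → ℝ≥0∞}
    (hg : AEMeasurable g (volume.restrict (Ioi 0)))
    (hh : ∀ r > 0, h r ≤ ENNReal.ofReal (r ^ (1 - c) / (1 - c)) * ∫⁻ u in Ioc 0 r, g u) :
    ENNReal.ofReal ((1 - c) ^ 2) * ∫⁻ r in Ioi 0, h r * ENNReal.ofReal (r ^ (2 * c - 3)) ≤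
      ∫⁻ u in Ioi 0, g u * ENNReal.ofReal (u ^ (c - 1)) := by
  have hκ : 0 < 1 - c := sub_pos.2 hc
  set w : ℝ → ℝ≥0∞ := fun r => ENNReal.ofReal ((1 - c) * r ^ (c - 2))
  have hw : Measurable w := (measurable_const.mul (measurable_id.pow_const _)).ennreal_ofReal
  have h_weight : ∀ r > 0, ENNReal.ofReal ((1 - c) ^ 2) * ENNReal.ofReal (r ^ (2 * c - 3)) *
      ENNReal.ofReal (r ^ (1 - c) / (1 - c)) = w r := by
    intro r hr
    simp only [w]
    rw [← ENNReal.ofReal_mul (sq_nonneg _), ← ENNReal.ofReal_mul (by positivity),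
      show c - 2 = (2 * c - 3) + (1 - c) by ring, Real.rpow_add hr]
    congr 1
    field_simp
  have h_tail : ∀ u > 0, ∫⁻ r in Ici u, w r = ENNReal.ofReal (u ^ (c - 1)) := by
    intro u hu
    simp only [w, ENNReal.ofReal_mul hκ.le]
    rw [lintegral_const_mul' _ _ ENNReal.ofReal_ne_top, lintegral_Ici_rpow (by linarith) hu,
      ← ENNReal.ofReal_mul hκ.le, show c - 2 + 1 = c - 1 by ring]
    congr 1
    field_simp [(by linarith : c - 1 < 0).ne]
    ring
  calc ENNReal.ofReal ((1 - c) ^ 2) * ∫⁻ r in Ioi 0, h r * ENNReal.ofReal (r ^ (2 * c - 3))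
      = ∫⁻ r in Ioi 0, ENNReal.ofReal ((1 - c) ^ 2) * (h r * ENNReal.ofReal (r ^ (2 * c - 3))) :=
        (lintegral_const_mul' _ _ ENNReal.ofReal_ne_top).symm
    _ ≤ ∫⁻ r in Ioi 0, w r * ∫⁻ u in Ioc 0 r, g u := by
        refine setLIntegral_mono' measurableSet_Ioi fun r hr => ?_
        rw [← h_weight r hr, mul_assoc _ (ENNReal.ofReal (r ^ (1 - c) / (1 - c))), mul_comm (h r),
          ← mul_assoc]
        gcongr
        exact hh r hr
    _ = ∫⁻ u in Ioi 0, g u * ∫⁻ r in Ici u, w r :=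
        lintegral_Ioi_mul_lintegral_Ioc volume 0 hw.aemeasurable hg
    _ = ∫⁻ u in Ioi 0, g u * ENNReal.ofReal (u ^ (c - 1)) :=
        setLIntegral_congr_fun measurableSet_Ioi fun u hu => by rw [h_tail u hu]

/-- Weighted Hardy inequality at the origin, case `a < 1/2`: if `f` is locally absolutely
continuous on `(0,∞)` with `∫₀^∞ |f'(r)|² r^(2a) dr < ∞`, then `f` has a boundary value
`L = f(0)` at the origin and
`(a - 1/2)² ∫₀^∞ |f(r) - f(0)|² r^(2a-2) dr ≤ ∫₀^∞ |f'(r)|² r^(2a) dr`. -/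
theorem stmt_3 (f f' : ℝ → ℂ) (a : ℝ) (ha : a < 1/2)
    (hloc : ∀ s ∈ Ioi (0:ℝ), ∀ t ∈ Ioi (0:ℝ), IntervalIntegrable f' volume s t)
    (hFTC : ∀ s ∈ Ioi (0:ℝ), ∀ t ∈ Ioi (0:ℝ), f t - f s = ∫ r in s..t, f' r)
    (hint : ∫⁻ r in Ioi (0:ℝ), ENNReal.ofReal (‖f' r‖^2 * r ^ (2*a)) < ⊤) :
    ∃ L : ℂ, Tendsto f (𝓝[>] (0:ℝ)) (𝓝 L) ∧
      ENNReal.ofReal ((a - 1/2)^2) *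
          ∫⁻ r in Ioi (0:ℝ), ENNReal.ofReal (‖f r - L‖^2 * r ^ (2*a - 2))
        ≤ ∫⁻ r in Ioi (0:ℝ), ENNReal.ofReal (‖f' r‖^2 * r ^ (2*a)) := by
  have hc : a + 1/2 < 1 := by linarith
  set g : ℝ → ℝ≥0∞ := fun u => ENNReal.ofReal (‖f' u‖ ^ 2 * u ^ (a + 1/2))
  have hg_fin : ∫⁻ u in Ioc 0 1, g u ≠ ∞ := by
    refine (((setLIntegral_mono' measurableSet_Ioc fun u hu => ?_).trans
      (lintegral_mono_set Ioc_subset_Ioi_self)).trans_lt hint).ne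
    exact ENNReal.ofReal_le_ofReal (mul_le_mul_of_nonneg_left
      (Real.rpow_le_rpow_of_exponent_ge hu.1 hu.2 (by linarith)) (sq_nonneg _))
  have hg : AEMeasurable g (volume.restrict (Ioi 0)) :=
    (((aemeasurable_restrict_Ioi_of_intervalIntegrable hloc).norm.pow_const 2).mul
      (measurable_id.pow_const _).aemeasurable).ennreal_ofReal
  obtain ⟨L, hL, h_bound⟩ :=
    exists_tendsto_nhdsGT_zero_of_lintegral_Ioc_ne_top hc hloc hFTC hg_fin
  refine ⟨L, hL, ?_⟩
  calc ENNReal.ofReal ((a - 1/2)^2) *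
        ∫⁻ r in Ioi (0:ℝ), ENNReal.ofReal (‖f r - L‖^2 * r ^ (2*a - 2))
      = ENNReal.ofReal ((1 - (a + 1/2)) ^ 2) * ∫⁻ r in Ioi 0,
          ENNReal.ofReal (‖f r - L‖ ^ 2) * ENNReal.ofReal (r ^ (2 * (a + 1/2) - 3)) := by
        rw [show (a - 1/2)^2 = (1 - (a + 1/2))^2 by ring, show 2*a - 2 = 2 * (a + 1/2) - 3 by ring]
        simp_rw [← ENNReal.ofReal_mul (sq_nonneg _)]
    _ ≤ ∫⁻ u in Ioi 0, g u * ENNReal.ofReal (u ^ (a + 1/2 - 1)) :=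
        lintegral_mul_rpow_le_of_le_lintegral_Ioc hc hg h_bound
    _ = ∫⁻ r in Ioi (0:ℝ), ENNReal.ofReal (‖f' r‖^2 * r ^ (2*a)) :=
        setLIntegral_congr_fun measurableSet_Ioi fun u hu => by
          rw [← ENNReal.ofReal_mul (mul_nonneg (sq_nonneg _) (Real.rpow_nonneg (le_of_lt hu) _)),
            mul_assoc, ← Real.rpow_add hu]
          ring_nf
end

section
/- Weighted Hardy inequality at infinity: let a > 1/2 and let f be locally absolutely continuous on (0,∞) with ∫₀^∞ |f'(r)|² r^{2a} dr < ∞. Then the limit f(∞) = lim_{r→∞} f(r) exists and (a - 1/2)² ∫₀^∞ |f(r) - f(∞)|² r^{2a-2} dr ≤ ∫₀^∞ |f'(r)|² r^{2a} dr. -/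
/-!
Since `∫ |f'|² r^(2a) < ∞` with `2a > 1`, Cauchy–Schwarz against the weight `t^(-2a)` puts `f'` in
`L¹(r, ∞)` for every `r > 0`, so `f(∞)` exists and `|f(r) - f(∞)| ≤ ∫_r^∞ |f'|`. Cauchy–Schwarz
against `t^(-(a+1/2))` instead gives
`(∫_r^∞ |f'|)² r^(2a-2) ≤ (a-1/2)⁻¹ r^(a-3/2) ∫_r^∞ |f'(t)|² t^(a+1/2) dt`;
integrating in `r` and exchanging the order of integration produces
`∫_0^t r^(a-3/2) dr = t^(a-1/2)/(a-1/2)`, hence the constant `(a-1/2)⁻²`.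
-/

open MeasureTheory Set Filter Topology ENNReal

lemma ENNReal.ofReal_rpow_mul_ofReal_rpow {t : ℝ} (ht : 0 < t) (x y : ℝ) :
    ENNReal.ofReal (t ^ x) * ENNReal.ofReal (t ^ y) = ENNReal.ofReal (t ^ (x + y)) := by
  rw [← ENNReal.ofReal_mul (Real.rpow_nonneg ht.le x), Real.rpow_add ht]

lemma ENNReal.ofReal_norm_sq_mul {E : Type*} [NormedAddCommGroup E] (z : E) (w : ℝ) :
    ENNReal.ofReal (‖z‖ ^ 2 * w) = ‖z‖ₑ ^ 2 * ENNReal.ofReal w := by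
  rw [ENNReal.ofReal_mul (by positivity), ENNReal.ofReal_pow (norm_nonneg z), ofReal_norm]

lemma lintegral_Ioi_rpow_of_lt {c : ℝ} (hc : c < -1) {r : ℝ} (hr : 0 < r) :
    ∫⁻ t in Ioi r, ENNReal.ofReal (t ^ c) = ENNReal.ofReal (-r ^ (c + 1) / (c + 1)) := by
  rw [← ofReal_integral_eq_lintegral_ofReal (integrableOn_Ioi_rpow_of_lt hc hr)
    ((ae_restrict_iff' measurableSet_Ioi).2 (.of_forall fun t ht ↦
      Real.rpow_nonneg (hr.trans ht).le c)), integral_Ioi_rpow_of_lt hc hr]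

lemma lintegral_Ioo_rpow {c : ℝ} (hc : -1 < c) {t : ℝ} (ht : 0 < t) :
    ∫⁻ r in Ioo 0 t, ENNReal.ofReal (r ^ c) = ENNReal.ofReal (t ^ (c + 1) / (c + 1)) := by
  have hi : IntegrableOn (fun r : ℝ ↦ r ^ c) (Ioo 0 t) :=
    (intervalIntegral.intervalIntegrable_rpow' hc).1.mono_set Ioo_subset_Ioc_self
  rw [← ofReal_integral_eq_lintegral_ofReal hi ((ae_restrict_iff' measurableSet_Ioo).2
    (.of_forall fun r hr ↦ Real.rpow_nonneg hr.1.le c)), ← integral_Ioc_eq_integral_Ioo,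
    ← intervalIntegral.integral_of_le ht.le, integral_rpow (.inl hc),
    Real.zero_rpow (by linarith), sub_zero]

lemma ENNReal.sq_lintegral_mul_le {α : Type*} [MeasurableSpace α] {μ : Measure α}
    {u v : α → ℝ≥0∞} (hu : AEMeasurable u μ) (hv : AEMeasurable v μ) :
    (∫⁻ x, u x * v x ∂μ) ^ 2 ≤ (∫⁻ x, u x ^ 2 ∂μ) * ∫⁻ x, v x ^ 2 ∂μ := by
  have h := ENNReal.lintegral_mul_le_Lp_mul_Lq μ .two_two hu hv
  simp only [Pi.mul_apply, ENNReal.rpow_two] at h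
  calc (∫⁻ x, u x * v x ∂μ) ^ 2
      ≤ ((∫⁻ x, u x ^ 2 ∂μ) ^ (1 / 2 : ℝ) * (∫⁻ x, v x ^ 2 ∂μ) ^ (1 / 2 : ℝ)) ^ 2 := by gcongr
    _ = (∫⁻ x, u x ^ 2 ∂μ) * ∫⁻ x, v x ^ 2 ∂μ := by
      rw [mul_pow, ← ENNReal.rpow_two, ← ENNReal.rpow_two, ← ENNReal.rpow_mul, ← ENNReal.rpow_mul]
      norm_num

lemma sq_lintegral_Ioi_le {g : ℝ → ℝ≥0∞} {p r : ℝ} (hp : 1 < p) (hr : 0 < r)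
    (hg : AEMeasurable g (volume.restrict (Ioi r))) :
    (∫⁻ t in Ioi r, g t) ^ 2 ≤
      (∫⁻ t in Ioi r, g t ^ 2 * ENNReal.ofReal (t ^ p)) *
        ENNReal.ofReal (r ^ (1 - p) / (p - 1)) := by
  have hsplit : ∫⁻ t in Ioi r, g t
      = ∫⁻ t in Ioi r, (g t * ENNReal.ofReal (t ^ (p / 2))) * ENNReal.ofReal (t ^ (-(p / 2))) := by
    refine setLIntegral_congr_fun measurableSet_Ioi fun t ht ↦ ?_
    rw [mul_assoc, ENNReal.ofReal_rpow_mul_ofReal_rpow (hr.trans ht), add_neg_cancel,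
      Real.rpow_zero, ENNReal.ofReal_one, mul_one]
  have hweight : ∫⁻ t in Ioi r, (g t * ENNReal.ofReal (t ^ (p / 2))) ^ 2
      = ∫⁻ t in Ioi r, g t ^ 2 * ENNReal.ofReal (t ^ p) := by
    refine setLIntegral_congr_fun measurableSet_Ioi fun t ht ↦ ?_
    rw [mul_pow, sq (ENNReal.ofReal _), ENNReal.ofReal_rpow_mul_ofReal_rpow (hr.trans ht),
      add_halves]
  have hdual : ∫⁻ t in Ioi r, ENNReal.ofReal (t ^ (-(p / 2))) ^ 2
      = ENNReal.ofReal (r ^ (1 - p) / (p - 1)) := by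
    rw [setLIntegral_congr_fun measurableSet_Ioi fun t ht ↦ by
      rw [sq, ENNReal.ofReal_rpow_mul_ofReal_rpow (hr.trans ht), ← neg_add, add_halves],
      lintegral_Ioi_rpow_of_lt (by linarith) hr]
    congr 1
    rw [neg_div, ← div_neg]
    ring_nf
  rw [hsplit, ← hweight, ← hdual]
  exact ENNReal.sq_lintegral_mul_le (hg.mul (by fun_prop)) (by fun_prop)

lemma lintegral_Ioi_mul_lintegral_Ioi_swap {u v : ℝ → ℝ≥0∞} {c : ℝ}
    (hu : AEMeasurable u (volume.restrict (Ioi c)))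
    (hv : AEMeasurable v (volume.restrict (Ioi c))) :
    ∫⁻ r in Ioi c, u r * ∫⁻ t in Ioi r, v t = ∫⁻ t in Ioi c, v t * ∫⁻ r in Ioo c t, u r := by
  set G : ℝ × ℝ → ℝ≥0∞ := {q | q.1 < q.2}.indicator fun q ↦ u q.1 * v q.2
  have hG : AEMeasurable G ((volume.restrict (Ioi c)).prod (volume.restrict (Ioi c))) :=
    (hu.comp_fst.mul hv.comp_snd).indicator (measurableSet_lt measurable_fst measurable_snd)
  have hleft : ∀ r ∈ Ioi c, u r * ∫⁻ t in Ioi r, v t = ∫⁻ t in Ioi c, G (r, t) := by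
    intro r hr
    have : ∀ t, G (r, t) = (Ioi r).indicator (fun t ↦ u r * v t) t := fun t ↦ by
      simp [G, indicator_apply]
    simp_rw [this]
    rw [lintegral_indicator measurableSet_Ioi, Measure.restrict_restrict measurableSet_Ioi,
      inter_eq_left.2 (Ioi_subset_Ioi (le_of_lt hr)),
      lintegral_const_mul'' _ (hv.mono_set (Ioi_subset_Ioi (le_of_lt hr)))]
  have hright : ∀ t ∈ Ioi c, v t * ∫⁻ r in Ioo c t, u r = ∫⁻ r in Ioi c, G (r, t) := by
    intro t ht
    have : ∀ r, G (r, t) = (Iio t).indicator (fun r ↦ v t * u r) r := fun r ↦ by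
      simp [G, indicator_apply, mul_comm]
    simp_rw [this]
    rw [lintegral_indicator measurableSet_Iio, Measure.restrict_restrict measurableSet_Iio,
      Iio_inter_Ioi, lintegral_const_mul'' _ (hu.mono_set Ioo_subset_Ioi_self)]
  rw [setLIntegral_congr_fun measurableSet_Ioi hleft,
    setLIntegral_congr_fun measurableSet_Ioi hright]
  exact lintegral_lintegral_swap (f := fun r t ↦ G (r, t)) hG

theorem lintegral_sq_lintegral_Ioi_le {g : ℝ → ℝ≥0∞} {a : ℝ} (ha : 1 / 2 < a)
    (hg : AEMeasurable g (volume.restrict (Ioi 0))) :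
    ENNReal.ofReal ((a - 1 / 2) ^ 2) *
        ∫⁻ r in Ioi 0, (∫⁻ t in Ioi r, g t) ^ 2 * ENNReal.ofReal (r ^ (2 * a - 2))
      ≤ ∫⁻ t in Ioi 0, g t ^ 2 * ENNReal.ofReal (t ^ (2 * a)) := by
  have hb : 0 < a - 1 / 2 := by linarith
  set K := ENNReal.ofReal (a - 1 / 2)⁻¹
  set v : ℝ → ℝ≥0∞ := fun t ↦ g t ^ 2 * ENNReal.ofReal (t ^ (a + 1 / 2))
  have hv : AEMeasurable v (volume.restrict (Ioi 0)) := (hg.pow_const 2).mul (by fun_prop)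
  have hpoint : ∀ r ∈ Ioi (0 : ℝ), (∫⁻ t in Ioi r, g t) ^ 2 * ENNReal.ofReal (r ^ (2 * a - 2))
      ≤ K * (ENNReal.ofReal (r ^ (a - 3 / 2)) * ∫⁻ t in Ioi r, v t) := by
    intro r (hr : 0 < r)
    have hconst : ENNReal.ofReal (r ^ (1 - (a + 1 / 2)) / (a + 1 / 2 - 1)) *
        ENNReal.ofReal (r ^ (2 * a - 2)) = K * ENNReal.ofReal (r ^ (a - 3 / 2)) := by
      rw [← ENNReal.ofReal_mul (div_nonneg (by positivity) (by linarith)),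
        ← ENNReal.ofReal_mul (inv_pos.2 hb).le, div_mul_eq_mul_div, ← Real.rpow_add hr]
      ring_nf
    calc (∫⁻ t in Ioi r, g t) ^ 2 * ENNReal.ofReal (r ^ (2 * a - 2))
        ≤ (∫⁻ t in Ioi r, v t) * ENNReal.ofReal (r ^ (1 - (a + 1 / 2)) / (a + 1 / 2 - 1)) *
            ENNReal.ofReal (r ^ (2 * a - 2)) := by
          gcongr
          exact sq_lintegral_Ioi_le (by linarith) hr (hg.mono_set (Ioi_subset_Ioi hr.le))
      _ = K * (ENNReal.ofReal (r ^ (a - 3 / 2)) * ∫⁻ t in Ioi r, v t) := by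
          rw [mul_assoc, hconst]
          ring
  have hinner : ∀ t ∈ Ioi (0 : ℝ), v t * ∫⁻ r in Ioo 0 t, ENNReal.ofReal (r ^ (a - 3 / 2))
      = K * (g t ^ 2 * ENNReal.ofReal (t ^ (2 * a))) := by
    intro t (ht : 0 < t)
    have hconst : ENNReal.ofReal (t ^ (a + 1 / 2)) *
        ENNReal.ofReal (t ^ (a - 3 / 2 + 1) / (a - 3 / 2 + 1)) = K * ENNReal.ofReal (t ^ (2 * a)) := by
      rw [← ENNReal.ofReal_mul (by positivity), ← ENNReal.ofReal_mul (inv_pos.2 hb).le,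
        mul_div_assoc', ← Real.rpow_add ht]
      ring_nf
    rw [lintegral_Ioo_rpow (by linarith) ht, mul_assoc, hconst]
    ring
  calc ENNReal.ofReal ((a - 1 / 2) ^ 2) *
        ∫⁻ r in Ioi 0, (∫⁻ t in Ioi r, g t) ^ 2 * ENNReal.ofReal (r ^ (2 * a - 2))
      ≤ ENNReal.ofReal ((a - 1 / 2) ^ 2) *
          ∫⁻ r in Ioi 0, K * (ENNReal.ofReal (r ^ (a - 3 / 2)) * ∫⁻ t in Ioi r, v t) :=
        mul_le_mul_right (setLIntegral_mono' measurableSet_Ioi hpoint) _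
    _ = ENNReal.ofReal ((a - 1 / 2) ^ 2) * K *
          ∫⁻ t in Ioi 0, v t * ∫⁻ r in Ioo 0 t, ENNReal.ofReal (r ^ (a - 3 / 2)) := by
        rw [lintegral_const_mul' _ _ ENNReal.ofReal_ne_top,
          lintegral_Ioi_mul_lintegral_Ioi_swap (by fun_prop) hv, mul_assoc]
    _ = ENNReal.ofReal ((a - 1 / 2) ^ 2) * K * K *
          ∫⁻ t in Ioi 0, g t ^ 2 * ENNReal.ofReal (t ^ (2 * a)) := by
        rw [setLIntegral_congr_fun measurableSet_Ioi hinner,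
          lintegral_const_mul' _ _ ENNReal.ofReal_ne_top]
        simp only [mul_assoc]
        rfl
    _ = ∫⁻ t in Ioi 0, g t ^ 2 * ENNReal.ofReal (t ^ (2 * a)) := by
        rw [← ENNReal.ofReal_mul (by positivity), ← ENNReal.ofReal_mul (by positivity),
          sq, mul_assoc, mul_assoc, mul_inv_cancel_left₀ hb.ne', mul_inv_cancel₀ hb.ne',
          ENNReal.ofReal_one, one_mul]

lemma locallyIntegrableOn_Ioi_of_intervalIntegrable {E : Type*} [NormedAddCommGroup E]
    {f : ℝ → E} {c : ℝ} (hf : ∀ s ∈ Ioi c, ∀ t ∈ Ioi c, IntervalIntegrable f volume s t) :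
    LocallyIntegrableOn f (Ioi c) := by
  rw [locallyIntegrableOn_iff isOpen_Ioi.isLocallyClosed]
  intro k hkc hk
  rcases k.eq_empty_or_nonempty with rfl | hne
  · exact integrableOn_empty
  have hinf := hk.sInf_mem hne
  have hsup := hk.sSup_mem hne
  have hIcc : IntegrableOn f (Icc (sInf k) (sSup k)) :=
    (intervalIntegrable_iff_integrableOn_Icc_of_le (csInf_le hk.bddBelow hsup)).1
      (hf _ (hkc hinf) _ (hkc hsup))
  exact hIcc.mono_set fun x hx ↦ ⟨csInf_le hk.bddBelow hx, le_csSup hk.bddAbove hx⟩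

lemma integrableOn_Ioi_of_lintegral_sq_mul_rpow_ne_top {E : Type*} [NormedAddCommGroup E]
    {f : ℝ → E} {p r : ℝ} (hp : 1 < p) (hr : 0 < r)
    (hf : AEStronglyMeasurable f (volume.restrict (Ioi r)))
    (h : ∫⁻ t in Ioi r, ‖f t‖ₑ ^ 2 * ENNReal.ofReal (t ^ p) ≠ ∞) :
    IntegrableOn f (Ioi r) := by
  refine ⟨hf, ?_⟩
  have hsq := sq_lintegral_Ioi_le hp hr hf.enorm
  have : (∫⁻ t in Ioi r, ‖f t‖ₑ) ^ 2 ≠ ∞ :=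
    ne_top_of_le_ne_top (ENNReal.mul_ne_top h ENNReal.ofReal_ne_top) hsq
  exact (ENNReal.pow_ne_top_iff.1 this).resolve_right two_ne_zero |>.lt_top

lemma tendsto_add_setIntegral_Ioi {E : Type*} [NormedAddCommGroup E] [NormedSpace ℝ E]
    {f f' : ℝ → E} {r : ℝ} (hf' : IntegrableOn f' (Ioi r))
    (hf : ∀ t, r < t → f t - f r = ∫ x in r..t, f' x) :
    Tendsto f atTop (𝓝 (f r + ∫ x in Ioi r, f' x)) := by
  refine (tendsto_const_nhds.add (intervalIntegral_tendsto_integral_Ioi r hf' tendsto_id)).congr' ?_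
  filter_upwards [eventually_gt_atTop r] with t ht
  rw [id, ← hf t ht, add_sub_cancel]

/-- Weighted Hardy inequality at infinity, case `a > 1/2`: if `f` is locally absolutely
continuous on `(0,∞)` with `∫₀^∞ |f'(r)|² r^(2a) dr < ∞`, then `f` has a limit
`L = f(∞)` at infinity and
`(a - 1/2)² ∫₀^∞ |f(r) - f(∞)|² r^(2a-2) dr ≤ ∫₀^∞ |f'(r)|² r^(2a) dr`. -/
theorem stmt_4 (f f' : ℝ → ℂ) (a : ℝ) (ha : 1/2 < a)
    (hloc : ∀ s ∈ Ioi (0:ℝ), ∀ t ∈ Ioi (0:ℝ), IntervalIntegrable f' volume s t)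
    (hFTC : ∀ s ∈ Ioi (0:ℝ), ∀ t ∈ Ioi (0:ℝ), f t - f s = ∫ r in s..t, f' r)
    (hint : ∫⁻ r in Ioi (0:ℝ), ENNReal.ofReal (‖f' r‖^2 * r ^ (2*a)) < ⊤) :
    ∃ L : ℂ, Tendsto f atTop (𝓝 L) ∧
      ENNReal.ofReal ((a - 1/2)^2) *
          ∫⁻ r in Ioi (0:ℝ), ENNReal.ofReal (‖f r - L‖^2 * r ^ (2*a - 2))
        ≤ ∫⁻ r in Ioi (0:ℝ), ENNReal.ofReal (‖f' r‖^2 * r ^ (2*a)) := by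
  simp only [ENNReal.ofReal_norm_sq_mul] at hint ⊢
  have hmeas := (locallyIntegrableOn_Ioi_of_intervalIntegrable hloc).aestronglyMeasurable
  have htail : ∀ r, 0 < r → IntegrableOn f' (Ioi r) := fun r hr ↦
    integrableOn_Ioi_of_lintegral_sq_mul_rpow_ne_top (by linarith) hr
      (hmeas.mono_set (Ioi_subset_Ioi hr.le))
      (ne_top_of_le_ne_top hint.ne (lintegral_mono_set (Ioi_subset_Ioi hr.le)))
  have hlim : ∀ r, 0 < r → Tendsto f atTop (𝓝 (f r + ∫ t in Ioi r, f' t)) := fun r hr ↦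
    tendsto_add_setIntegral_Ioi (htail r hr) fun t ht ↦ hFTC r hr t (hr.trans ht)
  refine ⟨_, hlim 1 one_pos, ?_⟩
  have hdist : ∀ r ∈ Ioi (0 : ℝ), ‖f r - (f 1 + ∫ t in Ioi 1, f' t)‖ₑ ≤ ∫⁻ t in Ioi r, ‖f' t‖ₑ := by
    intro r (hr : 0 < r)
    rw [← tendsto_nhds_unique (hlim r hr) (hlim 1 one_pos), sub_add_cancel_left, enorm_neg]
    exact enorm_integral_le_lintegral_enorm _
  calc _ ≤ ENNReal.ofReal ((a - 1 / 2) ^ 2) *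
          ∫⁻ r in Ioi 0, (∫⁻ t in Ioi r, ‖f' t‖ₑ) ^ 2 * ENNReal.ofReal (r ^ (2 * a - 2)) := by
        refine mul_le_mul_right (setLIntegral_mono' measurableSet_Ioi fun r hr ↦ ?_) _
        gcongr
        exact hdist r hr
    _ ≤ _ := lintegral_sq_lintegral_Ioi_le ha hmeas.enorm
end

section
/- Let k, λ, μ, ν ∈ ℝ with δ := (k+λ)² + μ² − ν² ≥ 0, set γ := √δ. Define M to be the matrix [[−(k+λ−γ), −ν+μ],[ν+μ, k+λ−γ]] if it is invertible, and [[−ν−μ, −(k+λ+γ)],[−(k+λ+γ), −ν+μ]] otherwise. Then M satisfies the intertwining identity: M · [[∂_r + (k+λ)/r, (ν−μ)/r],[−(ν+μ)/r, ∂_r − (k+λ)/r]] = [[∂_r − γ/r, 0],[0, ∂_r + γ/r]] · M, as operators on smooth ℂ²-valued functions on (0,∞). -/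
open MeasureTheory Set Filter Topology
open scoped Classical

/-- Intertwining identity for the radial Dirac operator with the matrix `M` (case `δ ≥ 0`,
`γ = √δ`): `M` transforms the matrix differential operator
`[[∂_r + (k+λ)/r, (ν-μ)/r], [-(ν+μ)/r, ∂_r - (k+λ)/r]]` into
`[[∂_r - γ/r, 0], [0, ∂_r + γ/r]]`, as operators on `C¹((0,∞), ℂ²)`. -/
theorem stmt_18 (k l μ ν : ℝ) (hδ : 0 ≤ (k+l)^2 + μ^2 - ν^2)
    (γ : ℝ) (hγ : γ = Real.sqrt ((k+l)^2 + μ^2 - ν^2))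
    (M : Matrix (Fin 2) (Fin 2) ℝ)
    (hM : M = if IsUnit (Matrix.det !![-(k+l-γ), -ν+μ; ν+μ, k+l-γ])
        then !![-(k+l-γ), -ν+μ; ν+μ, k+l-γ]
        else !![-ν-μ, -(k+l+γ); -(k+l+γ), -ν+μ])
    (f₁ f₂ f₁' f₂' : ℝ → ℂ)
    (h₁ : ∀ r ∈ Ioi (0:ℝ), HasDerivAt f₁ (f₁' r) r)
    (h₂ : ∀ r ∈ Ioi (0:ℝ), HasDerivAt f₂ (f₂' r) r) :
    ∀ r ∈ Ioi (0:ℝ),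
      ((M 0 0 : ℂ) * (f₁' r + (((k+l)/r : ℝ) : ℂ) * f₁ r + (((ν-μ)/r : ℝ) : ℂ) * f₂ r)
          + (M 0 1 : ℂ) * (-((((ν+μ)/r : ℝ) : ℂ)) * f₁ r + f₂' r
              - (((k+l)/r : ℝ) : ℂ) * f₂ r)
        = ((M 0 0 : ℂ) * f₁' r + (M 0 1 : ℂ) * f₂' r)
          - ((γ/r : ℝ) : ℂ) * ((M 0 0 : ℂ) * f₁ r + (M 0 1 : ℂ) * f₂ r)) ∧
      ((M 1 0 : ℂ) * (f₁' r + (((k+l)/r : ℝ) : ℂ) * f₁ r + (((ν-μ)/r : ℝ) : ℂ) * f₂ r)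
          + (M 1 1 : ℂ) * (-((((ν+μ)/r : ℝ) : ℂ)) * f₁ r + f₂' r
              - (((k+l)/r : ℝ) : ℂ) * f₂ r)
        = ((M 1 0 : ℂ) * f₁' r + (M 1 1 : ℂ) * f₂' r)
          + ((γ/r : ℝ) : ℂ) * ((M 1 0 : ℂ) * f₁ r + (M 1 1 : ℂ) * f₂ r)) := by
  intro r hr
  have hr0 : (r:ℝ) ≠ 0 := ne_of_gt hr
  have hrC : (r:ℂ) ≠ 0 := by exact_mod_cast hr0
  have hγ2 : (γ:ℂ)^2 = ((k:ℂ)+l)^2+(μ:ℂ)^2-(ν:ℂ)^2 := by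
    have : γ^2 = (k+l)^2+μ^2-ν^2 := by rw [hγ]; exact Real.sq_sqrt hδ
    exact_mod_cast this
  subst hM
  split_ifs with h
  · constructor
    · norm_num [Matrix.cons_val_zero, Matrix.cons_val_one, Matrix.head_cons,
        Matrix.head_fin_const]
      push_cast
      field_simp
      linear_combination hγ2 * f₁ r
    · norm_num [Matrix.cons_val_zero, Matrix.cons_val_one, Matrix.head_cons,
        Matrix.head_fin_const]
      push_cast
      field_simp
      linear_combination hγ2 * f₂ r
  · constructor
    · norm_num [Matrix.cons_val_zero, Matrix.cons_val_one, Matrix.head_cons,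
        Matrix.head_fin_const]
      push_cast
      field_simp
      linear_combination (-hγ2) * f₂ r
    · norm_num [Matrix.cons_val_zero, Matrix.cons_val_one, Matrix.head_cons,
        Matrix.head_fin_const]
      push_cast
      field_simp
      linear_combination hγ2 * f₁ r
end
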